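/- arXiv:2212.14571 — 4 statements merged into one kernel-verified Lean document; each statement's English description precedes it below -/
import Mathlib

section
/- For the binary entropy function I(x) = ((1+x)log(1+x) + (1-x)log(1-x))/2, we have x²/2 ≤ I(x) ≤ (x²/2)(1 + x²/2) for all x ∈ [0,1]. -/
open Real Filter

-- telescoping sum
lemma telesum : HasSum (fun k : ℕ => (1:ℝ)/(k+1) - 1/(k+2)) 1 := by
  have hnn : ∀ k : ℕ, 0 ≤ (1:ℝ)/(k+1) - 1/(k+2) := by
    intro k
    have h1 : (0:ℝ) < k+1 := by positivity
    have h2 : (0:ℝ) < k+2 := by positivity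
    rw [sub_nonneg, div_le_div_iff₀ h2 h1]; linarith
  rw [hasSum_iff_tendsto_nat_of_nonneg hnn]
  have heq : ∀ n : ℕ, ∑ i ∈ Finset.range n, ((1:ℝ)/(i+1) - 1/(i+2)) = 1 - 1/(n+1) := by
    intro n
    induction n with
    | zero => simp
    | succ n ih => rw [Finset.sum_range_succ, ih]; push_cast; ring
  simp only [heq]
  have h := (tendsto_const_nhds (x := (1:ℝ)) (f := atTop)).sub
    tendsto_one_div_add_atTop_nhds_zero_nat
  simpa using h

/-- The binary entropy function `I(x) = ((1+x)log(1+x) + (1-x)log(1-x))/2`. -/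
noncomputable def binEnt (x : ℝ) : ℝ :=
  ((1 + x) * Real.log (1 + x) + (1 - x) * Real.log (1 - x)) / 2

lemma binEnt_hasSum {x : ℝ} (h0 : 0 ≤ x) (h1 : x < 1) :
    HasSum (fun k : ℕ => x ^ (2*k+2) * (1/(2*k+1) - 1/(2*k+2))) (binEnt x) := by
  have habs : |x| < 1 := by rw [abs_of_nonneg h0]; exact h1
  have habs2 : |x^2| < 1 := by
    rw [abs_of_nonneg (sq_nonneg x)]
    nlinarith
  have hA := (Real.hasSum_log_sub_log_of_abs_lt_one habs).mul_left (x/2)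
  have hB := (Real.hasSum_pow_div_log_of_abs_lt_one habs2).mul_left (-(1/2))
  have hsum := hA.add hB
  have hlog : Real.log (1 - x^2) = Real.log (1+x) + Real.log (1-x) := by
    have : 1 - x^2 = (1+x)*(1-x) := by ring
    rw [this, Real.log_mul (by linarith) (by linarith)]
  have hval : x / 2 * (Real.log (1 + x) - Real.log (1 - x)) +
      -(1/2) * -Real.log (1 - x ^ 2) = binEnt x := by
    rw [hlog]; unfold binEnt; ring
  rw [hval] at hsum
  refine hsum.congr_fun fun k => ?_
  have hk1 : (2*(k:ℝ)+1) ≠ 0 := by positivity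
  have hk2 : ((k:ℝ)+1) ≠ 0 := by positivity
  have hx2 : (x^2)^(k+1) = x^(2*k+2) := by rw [← pow_mul]; ring_nf
  push_cast
  rw [hx2]
  field_simp
  ring

theorem binEnt_quadratic_bounds :
    ∀ x ∈ Set.Icc (0 : ℝ) 1,
      x ^ 2 / 2 ≤ binEnt x ∧ binEnt x ≤ x ^ 2 / 2 * (1 + x ^ 2 / 2) := by
  rintro x ⟨h0, h1⟩
  rcases eq_or_lt_of_le h1 with rfl | hlt
  · have hb : binEnt 1 = Real.log 2 := by
      unfold binEnt
      norm_num
    rw [hb]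
    constructor
    · norm_num
      linarith [Real.log_two_gt_d9]
    · norm_num
      linarith [Real.log_two_lt_d9]
  · have hsum := binEnt_hasSum h0 hlt
    set f : ℕ → ℝ := fun k => x ^ (2*k+2) * (1/(2*k+1) - 1/(2*k+2)) with hf
    have hnn : ∀ k : ℕ, 0 ≤ f k := by
      intro k
      apply mul_nonneg (pow_nonneg h0 _)
      have ha : (0:ℝ) < 2*k+1 := by positivity
      have hb : (0:ℝ) < 2*k+2 := by positivity
      rw [sub_nonneg, div_le_div_iff₀ hb ha]; linarith
    have hf0 : f 0 = x^2/2 := by simp [hf]; ring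
    constructor
    · have := le_hasSum hsum 0 (fun j _ => hnn j)
      rwa [hf0] at this
    · have htail : HasSum (fun n => f (n+1)) (binEnt x - x^2/2) := by
        have := (hasSum_nat_add_iff' 1).mpr hsum
        simpa [hf0] using this
      have hcmp : ∀ k : ℕ, f (k+1) ≤ x^4/4 * (1/(k+1) - 1/(k+2)) := by
        intro k
        have a0 : (0:ℝ) ≤ k := k.cast_nonneg
        have e1 : x ^ (2*(k+1)+2) ≤ x^4 := by
          apply pow_le_pow_of_le_one h0 hlt.le
          omega
        have e2 : 1/(2*((k:ℝ)+1)+1) - 1/(2*((k:ℝ)+1)+2) =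
            1/((2*(k:ℝ)+3)*(2*(k:ℝ)+4)) := by
          rw [div_sub_div _ _ (by positivity) (by positivity)]
          norm_num
          ring
        have e3 : (1:ℝ)/((k:ℝ)+1) - 1/((k:ℝ)+2) = 1/(((k:ℝ)+1)*((k:ℝ)+2)) := by
          rw [div_sub_div _ _ (by positivity) (by positivity)]
          norm_num
        simp only [hf]
        push_cast
        rw [e2, e3]
        calc x ^ (2*(k+1)+2) * (1/((2*(k:ℝ)+3)*(2*(k:ℝ)+4)))
            ≤ x^4 * (1/((2*(k:ℝ)+2)*(2*(k:ℝ)+4))) := by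
              apply mul_le_mul e1 ?_ (by positivity) (by positivity)
              apply one_div_le_one_div_of_le (by positivity)
              nlinarith
          _ = x^4/4 * (1/(((k:ℝ)+1)*((k:ℝ)+2))) := by
              rw [div_mul_eq_mul_div, mul_one_div, mul_one_div, div_div]
              congr 1
              ring
      have hle := hasSum_le hcmp htail (telesum.mul_left (x^4/4))
      simp at hle
      nlinarith [sq_nonneg x]
end

section
/- The function φ(x) := x·I'(x)/I(x), defined for x ∈ (0,1) with I the binary entropy function, extended by φ(0) = 2, is continuous and strictly increasing on [0,1), and its range is [2, ∞). In particular, for each real p ≥ 2 there exists a unique x⋆ ∈ [0,1) with φ(x⋆) = p. -/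
/-- `φ(x) = x·I'(x)/I(x)` on `(0,1)`, where `I' = arctanh`, extended by `φ(0) = 2`. -/
noncomputable def phiEnt (x : ℝ) : ℝ :=
  if x = 0 then 2 else x * ((Real.log (1 + x) - Real.log (1 - x)) / 2) / binEnt x


open Set Real


noncomputable def gEnt (x : ℝ) : ℝ := (Real.log (1 + x) - Real.log (1 - x)) / 2

lemma gEnt_zero : gEnt 0 = 0 := by simp [gEnt]

lemma hasDerivAt_log1p {x : ℝ} (hx : -1 < x) :
    HasDerivAt (fun y : ℝ => Real.log (1 + y)) (1 / (1 + x)) x := by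
  have h : HasDerivAt (fun y : ℝ => 1 + y) 1 x := (hasDerivAt_id x).const_add 1
  simpa using h.log (by linarith)

lemma hasDerivAt_log1m {x : ℝ} (hx : x < 1) :
    HasDerivAt (fun y : ℝ => Real.log (1 - y)) (-(1 / (1 - x))) x := by
  have h : HasDerivAt (fun y : ℝ => 1 - y) (-1) x := (hasDerivAt_id x).const_sub 1
  have := h.log (by linarith : (1:ℝ) - x ≠ 0)
  simpa [neg_div] using this

lemma hasDerivAt_gEnt {x : ℝ} (h1 : -1 < x) (h2 : x < 1) :
    HasDerivAt gEnt (1 / (1 - x ^ 2)) x := by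
  have h := ((hasDerivAt_log1p h1).sub (hasDerivAt_log1m h2)).div_const 2
  refine HasDerivAt.congr_deriv h ?_
  have e1 : (1:ℝ) + x ≠ 0 := by linarith
  have e2 : (1:ℝ) - x ≠ 0 := by linarith
  have e3 : (1:ℝ) - x ^ 2 ≠ 0 := by nlinarith
  field_simp
  ring

lemma hasDerivAt_binEnt {x : ℝ} (h1 : -1 < x) (h2 : x < 1) :
    HasDerivAt binEnt (gEnt x) x := by
  have ha : HasDerivAt (fun y : ℝ => (1 + y) * Real.log (1 + y))
      (Real.log (1 + x) + 1) x := by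
    have := ((hasDerivAt_id x).const_add 1).mul (hasDerivAt_log1p h1)
    refine HasDerivAt.congr_deriv this ?_
    have e1 : (1:ℝ) + x ≠ 0 := by linarith
    simp only [id_eq]
    field_simp
  have hb : HasDerivAt (fun y : ℝ => (1 - y) * Real.log (1 - y))
      (-(Real.log (1 - x) + 1)) x := by
    have := ((hasDerivAt_id x).const_sub 1).mul (hasDerivAt_log1m h2)
    refine HasDerivAt.congr_deriv this ?_
    have e2 : (1:ℝ) - x ≠ 0 := by linarith
    simp only [id_eq]
    field_simp
    ring
  have := (ha.add hb).div_const 2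
  refine HasDerivAt.congr_deriv this ?_
  simp [gEnt]
  ring
lemma continuousAt_gEnt {x : ℝ} (h1 : -1 < x) (h2 : x < 1) : ContinuousAt gEnt x :=
  (hasDerivAt_gEnt h1 h2).continuousAt

lemma continuousAt_binEnt {x : ℝ} (h1 : -1 < x) (h2 : x < 1) : ContinuousAt binEnt x :=
  (hasDerivAt_binEnt h1 h2).continuousAt

/-- Generic helper: f 0 = 0, f' > 0 on (0,1) ⇒ f > 0 on (0,1). -/
lemma pos_aux {f f' : ℝ → ℝ} (h0 : f 0 = 0)
    (hc : ContinuousOn f (Set.Ico 0 1))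
    (hd : ∀ x ∈ Set.Ioo (0:ℝ) 1, HasDerivAt f (f' x) x)
    (hp : ∀ x ∈ Set.Ioo (0:ℝ) 1, 0 < f' x) :
    ∀ x ∈ Set.Ioo (0:ℝ) 1, 0 < f x := by
  have hm : StrictMonoOn f (Set.Ico 0 1) := by
    apply strictMonoOn_of_deriv_pos (convex_Ico 0 1) hc
    intro x hx
    rw [interior_Ico] at hx
    rw [(hd x hx).deriv]
    exact hp x hx
  intro x hx
  have := hm ⟨le_rfl, one_pos⟩ ⟨hx.1.le, hx.2⟩ hx.1
  rwa [h0] at this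

/-- Generic helper: f 0 = 0, f' ≥ 0 on (0,1) ⇒ f ≥ 0 on [0,1). -/
lemma nonneg_aux {f f' : ℝ → ℝ} (h0 : f 0 = 0)
    (hc : ContinuousOn f (Set.Ico 0 1))
    (hd : ∀ x ∈ Set.Ioo (0:ℝ) 1, HasDerivAt f (f' x) x)
    (hp : ∀ x ∈ Set.Ioo (0:ℝ) 1, 0 ≤ f' x) :
    ∀ x ∈ Set.Ico (0:ℝ) 1, 0 ≤ f x := by
  have hm : MonotoneOn f (Set.Ico 0 1) := by
    apply monotoneOn_of_deriv_nonneg (convex_Ico 0 1) hc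
    · intro x hx
      rw [interior_Ico] at hx
      exact (hd x hx).differentiableAt.differentiableWithinAt
    · intro x hx
      rw [interior_Ico] at hx
      rw [(hd x hx).deriv]
      exact hp x hx
  intro x hx
  have := hm ⟨le_rfl, one_pos⟩ hx hx.1
  rwa [h0] at this

lemma contOn_gEnt : ContinuousOn gEnt (Set.Ico 0 1) := fun x hx =>
  (continuousAt_gEnt (by linarith [hx.1]) hx.2).continuousWithinAt

lemma contOn_binEnt : ContinuousOn binEnt (Set.Ico 0 1) := fun x hx =>
  (continuousAt_binEnt (by linarith [hx.1]) hx.2).continuousWithinAt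

/-- L1 : x < gEnt x on (0,1). -/
lemma lt_gEnt : ∀ x ∈ Set.Ioo (0:ℝ) 1, x < gEnt x := by
  have := pos_aux (f := fun x => gEnt x - x) (f' := fun x => 1 / (1 - x ^ 2) - 1)
    (by simp [gEnt_zero]) (contOn_gEnt.sub continuousOn_id)
    (fun x hx => (hasDerivAt_gEnt (by linarith [hx.1]) hx.2).sub (hasDerivAt_id x))
    (fun x hx => by
      have h3 : (0:ℝ) < 1 - x ^ 2 := by nlinarith [hx.1, hx.2]
      have : (1:ℝ) - x ^ 2 < 1 := by nlinarith [hx.1]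
      rw [sub_pos, lt_div_iff₀ h3]
      linarith)
  intro x hx
  have h := this x hx
  linarith

lemma gEnt_pos : ∀ x ∈ Set.Ioo (0:ℝ) 1, 0 < gEnt x := fun x hx =>
  lt_of_lt_of_le hx.1 (lt_gEnt x hx).le

/-- L3 : binEnt > 0 on (0,1). -/
lemma binEnt_pos : ∀ x ∈ Set.Ioo (0:ℝ) 1, 0 < binEnt x :=
  pos_aux (by simp [binEnt]) contOn_binEnt
    (fun x hx => hasDerivAt_binEnt (by linarith [hx.1]) hx.2) gEnt_pos

/-- L3' : gEnt x ≤ x/(1-x²) on [0,1). -/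
lemma gEnt_le : ∀ x ∈ Set.Ico (0:ℝ) 1, gEnt x ≤ x / (1 - x ^ 2) := by
  have hD : ∀ x ∈ Set.Ioo (-1:ℝ) 1, HasDerivAt (fun y => y / (1 - y ^ 2))
      ((1 + x ^ 2) / (1 - x ^ 2) ^ 2) x := by
    intro x hx
    have h3 : (1:ℝ) - x ^ 2 ≠ 0 := by nlinarith [hx.1, hx.2]
    have h4 : HasDerivAt (fun y : ℝ => 1 - y ^ 2) (-(2 * x)) x := by
      simpa using ((hasDerivAt_pow 2 x).const_sub 1)
    have := (hasDerivAt_id x).div h4 h3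
    refine HasDerivAt.congr_deriv this ?_
    simp only [id_eq]
    field_simp
    ring
  have key := nonneg_aux (f := fun x => x / (1 - x ^ 2) - gEnt x)
      (f' := fun x => (1 + x ^ 2) / (1 - x ^ 2) ^ 2 - 1 / (1 - x ^ 2))
    (by simp [gEnt_zero])
    (by
      apply ContinuousOn.sub _ contOn_gEnt
      intro x hx
      have h3 : (1:ℝ) - x ^ 2 ≠ 0 := by nlinarith [hx.1, hx.2]
      exact ((hD x ⟨by linarith [hx.1], hx.2⟩).continuousAt).continuousWithinAt)
    (fun x hx => (hD x ⟨by linarith [hx.1], hx.2⟩).sub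
      (hasDerivAt_gEnt (by linarith [hx.1]) hx.2))
    (fun x hx => by
      have h3 : (0:ℝ) < 1 - x ^ 2 := by nlinarith [hx.1, hx.2]
      rw [sub_nonneg, div_le_div_iff₀ h3 (by positivity)]
      nlinarith [hx.1])
  intro x hx
  linarith [key x hx]

/-- L6 : 2·binEnt x ≤ x·gEnt x on [0,1). -/
lemma two_binEnt_le : ∀ x ∈ Set.Ico (0:ℝ) 1, 2 * binEnt x ≤ x * gEnt x := by
  have key := nonneg_aux (f := fun x => x * gEnt x - 2 * binEnt x)
      (f' := fun x => x / (1 - x ^ 2) - gEnt x)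
    (by simp [gEnt_zero, binEnt])
    ((continuousOn_id.mul contOn_gEnt).sub (continuousOn_const.mul contOn_binEnt))
    (fun x hx => by
      have h1 : (-1:ℝ) < x := by linarith [hx.1]
      have := ((hasDerivAt_id x).mul (hasDerivAt_gEnt h1 hx.2)).sub
        ((hasDerivAt_binEnt h1 hx.2).const_mul 2)
      refine HasDerivAt.congr_deriv this ?_
      simp
      ring)
    (fun x hx => by
      have := gEnt_le x ⟨hx.1.le, hx.2⟩
      linarith)
  intro x hx
  have h := key x hx
  linarith

/-- L5' : binEnt x ≥ x²/2 on [0,1). -/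
lemma binEnt_ge : ∀ x ∈ Set.Ico (0:ℝ) 1, x ^ 2 / 2 ≤ binEnt x := by
  have key := nonneg_aux (f := fun x => binEnt x - x ^ 2 / 2)
      (f' := fun x => gEnt x - x)
    (by simp [binEnt])
    (contOn_binEnt.sub ((continuous_pow 2).continuousOn.div_const 2))
    (fun x hx => ((hasDerivAt_binEnt (by linarith [hx.1]) hx.2).sub
      ((hasDerivAt_pow 2 x).div_const 2)).congr_deriv (by simp))
    (fun x hx => by have := lt_gEnt x hx; linarith)
  intro x hx
  have h := key x hx
  linarith
/-- M(x) = 2·binEnt x - (x - x³)·gEnt x > 0 on (0,1). -/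
lemma M_pos : ∀ x ∈ Set.Ioo (0:ℝ) 1, 0 < 2 * binEnt x - (x - x ^ 3) * gEnt x := by
  have key := pos_aux (f := fun x => 2 * binEnt x - (x - x ^ 3) * gEnt x)
      (f' := fun x => (1 + 3 * x ^ 2) * gEnt x - x)
    (by simp [gEnt_zero, binEnt])
    ((continuousOn_const.mul contOn_binEnt).sub
      ((continuous_id.sub (continuous_pow 3)).continuousOn.mul contOn_gEnt))
    (fun x hx => by
      have h1 : (-1:ℝ) < x := by linarith [hx.1]
      have h3 : (1:ℝ) - x ^ 2 ≠ 0 := by nlinarith [hx.1, hx.2]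
      have hcube : HasDerivAt (fun y : ℝ => y - y ^ 3) (1 - 3 * x ^ 2) x := by
        exact ((hasDerivAt_id x).sub (hasDerivAt_pow 3 x)).congr_deriv (by norm_num)
      have := ((hasDerivAt_binEnt h1 hx.2).const_mul 2).sub
        (hcube.mul (hasDerivAt_gEnt h1 hx.2))
      refine HasDerivAt.congr_deriv this ?_
      field_simp
      ring)
    (fun x hx => by
      have := lt_gEnt x hx
      nlinarith [hx.1, hx.2])
  exact key

/-- N(x) = (gEnt x + x/(1-x²))·binEnt x - x·(gEnt x)² > 0 on (0,1). -/
lemma N_pos : ∀ x ∈ Set.Ioo (0:ℝ) 1,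
    0 < (gEnt x + x / (1 - x ^ 2)) * binEnt x - x * gEnt x ^ 2 := by
  have hD : ∀ x ∈ Set.Ioo (-1:ℝ) 1, HasDerivAt (fun y => y / (1 - y ^ 2))
      ((1 + x ^ 2) / (1 - x ^ 2) ^ 2) x := by
    intro x hx
    have h3 : (1:ℝ) - x ^ 2 ≠ 0 := by nlinarith [hx.1, hx.2]
    have h4 : HasDerivAt (fun y : ℝ => 1 - y ^ 2) (-(2 * x)) x := by
      simpa using ((hasDerivAt_pow 2 x).const_sub 1)
    have := (hasDerivAt_id x).div h4 h3
    refine HasDerivAt.congr_deriv this ?_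
    simp only [id_eq]
    field_simp
    ring
  have key := pos_aux
      (f := fun x => (gEnt x + x / (1 - x ^ 2)) * binEnt x - x * gEnt x ^ 2)
      (f' := fun x => (2 * binEnt x - (x - x ^ 3) * gEnt x) / (1 - x ^ 2) ^ 2)
    (by simp [gEnt_zero, binEnt])
    (by
      apply ContinuousOn.sub
      · apply ContinuousOn.mul _ contOn_binEnt
        apply contOn_gEnt.add
        intro x hx
        exact ((hD x ⟨by linarith [hx.1], hx.2⟩).continuousAt).continuousWithinAt
      · exact continuousOn_id.mul (contOn_gEnt.pow 2))
    (fun x hx => by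
      have h1 : (-1:ℝ) < x := by linarith [hx.1]
      have h3 : (1:ℝ) - x ^ 2 ≠ 0 := by nlinarith [hx.1, hx.2]
      have hg := hasDerivAt_gEnt h1 hx.2
      have hB := hasDerivAt_binEnt h1 hx.2
      have hsq : HasDerivAt (fun y => gEnt y ^ 2) (2 * gEnt x * (1 / (1 - x ^ 2))) x := by
        exact (hg.pow 2).congr_deriv (by norm_num)
      have := ((hg.add (hD x ⟨h1, hx.2⟩)).mul hB).sub ((hasDerivAt_id x).mul hsq)
      refine HasDerivAt.congr_deriv this ?_
      simp only [id_eq, Pi.add_apply]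
      field_simp
      ring)
    (fun x hx => by
      have hM := M_pos x hx
      have h3 : (0:ℝ) < 1 - x ^ 2 := by nlinarith [hx.1, hx.2]
      positivity)
  exact key

noncomputable def psiEnt (x : ℝ) : ℝ := x * gEnt x / binEnt x

lemma hasDerivAt_psiEnt {x : ℝ} (hx : x ∈ Set.Ioo (0:ℝ) 1) :
    HasDerivAt psiEnt
      (((gEnt x + x / (1 - x ^ 2)) * binEnt x - x * gEnt x ^ 2) / binEnt x ^ 2) x := by
  have h1 : (-1:ℝ) < x := by linarith [hx.1]
  have hg := hasDerivAt_gEnt h1 hx.2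
  have hB := hasDerivAt_binEnt h1 hx.2
  have hBne : binEnt x ≠ 0 := (binEnt_pos x hx).ne'
  have hnum : HasDerivAt (fun y => y * gEnt y) (gEnt x + x / (1 - x ^ 2)) x := by
    have := (hasDerivAt_id x).mul hg
    refine HasDerivAt.congr_deriv this ?_
    simp
    ring
  have := hnum.div hB hBne
  refine HasDerivAt.congr_deriv this ?_
  have h3 : (1:ℝ) - x ^ 2 ≠ 0 := by nlinarith [hx.1, hx.2]
  field_simp

lemma psiEnt_strictMono : StrictMonoOn psiEnt (Set.Ioo 0 1) := by
  apply strictMonoOn_of_deriv_pos (convex_Ioo 0 1)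
    (fun x hx => (hasDerivAt_psiEnt hx).continuousAt.continuousWithinAt)
  intro x hx
  rw [interior_Ioo] at hx
  rw [(hasDerivAt_psiEnt hx).deriv]
  have := N_pos x hx
  have := binEnt_pos x hx
  positivity

lemma two_le_psiEnt : ∀ x ∈ Set.Ioo (0:ℝ) 1, 2 ≤ psiEnt x := by
  intro x hx
  have hB := binEnt_pos x hx
  rw [psiEnt, le_div_iff₀ hB]
  have := two_binEnt_le x ⟨hx.1.le, hx.2⟩
  linarith

lemma psiEnt_le : ∀ x ∈ Set.Ioo (0:ℝ) 1, psiEnt x ≤ 2 / (1 - x ^ 2) := by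
  intro x hx
  have hB := binEnt_pos x hx
  have h3 : (0:ℝ) < 1 - x ^ 2 := by nlinarith [hx.1, hx.2]
  rw [psiEnt, div_le_div_iff₀ hB h3]
  have hg : gEnt x * (1 - x ^ 2) ≤ x := by
    have := gEnt_le x ⟨hx.1.le, hx.2⟩
    rwa [le_div_iff₀ h3] at this
  have hG := binEnt_ge x ⟨hx.1.le, hx.2⟩
  nlinarith [hx.1]

lemma binEnt_le_log_two : ∀ x ∈ Set.Ico (0:ℝ) 1, binEnt x ≤ Real.log 2 := by
  intro x hx
  have h1 : (0:ℝ) < 1 + x := by linarith [hx.1]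
  have h2 : (0:ℝ) < 1 - x := by linarith [hx.2]
  have ha : Real.log (1 + x) ≤ Real.log 2 := Real.log_le_log h1 (by linarith [hx.2])
  have ha0 : 0 ≤ Real.log (1 + x) := Real.log_nonneg (by linarith [hx.1])
  have hb : (1 - x) * Real.log (1 - x) ≤ 0 := by
    apply mul_nonpos_of_nonneg_of_nonpos h2.le
    exact Real.log_nonpos h2.le (by linarith [hx.1])
  have hl2 : 0 ≤ Real.log 2 := Real.log_nonneg one_le_two
  have : (1 + x) * Real.log (1 + x) ≤ 2 * Real.log 2 := by
    nlinarith [hx.1, hx.2]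
  rw [binEnt]
  linarith
lemma phiEnt_zero : phiEnt 0 = 2 := by simp [phiEnt]

lemma phiEnt_eq_psiEnt {x : ℝ} (hx : x ≠ 0) : phiEnt x = psiEnt x := by
  simp [phiEnt, psiEnt, gEnt, hx]

lemma two_le_phiEnt : ∀ x ∈ Set.Ico (0:ℝ) 1, 2 ≤ phiEnt x := by
  intro x hx
  rcases eq_or_lt_of_le hx.1 with h | h
  · rw [← h, phiEnt_zero]
  · rw [phiEnt_eq_psiEnt h.ne']
    exact two_le_psiEnt x ⟨h, hx.2⟩

lemma phiEnt_contOn : ContinuousOn phiEnt (Set.Ico 0 1) := by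
  intro x hx
  rcases eq_or_lt_of_le hx.1 with h | h
  · subst h
    rw [ContinuousWithinAt, phiEnt_zero]
    apply tendsto_of_tendsto_of_tendsto_of_le_of_le' (g := fun _ => (2:ℝ))
        (h := fun y => 2 / (1 - y ^ 2)) tendsto_const_nhds
    · have hc : ContinuousAt (fun y : ℝ => 2 / (1 - y ^ 2)) 0 := by
        apply ContinuousAt.div continuousAt_const
          ((continuous_const.sub (continuous_pow 2)).continuousAt)
        norm_num
      have h := hc.tendsto
      norm_num at h
      exact h.mono_left nhdsWithin_le_nhds
    · filter_upwards [self_mem_nhdsWithin] with y hy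
      exact two_le_phiEnt y hy
    · filter_upwards [self_mem_nhdsWithin] with y hy
      rcases eq_or_lt_of_le hy.1 with h | h
      · rw [← h, phiEnt_zero]; norm_num
      · rw [phiEnt_eq_psiEnt h.ne']
        exact psiEnt_le y ⟨h, hy.2⟩
  · apply ContinuousAt.continuousWithinAt
    have hpsi : ContinuousAt psiEnt x := (hasDerivAt_psiEnt ⟨h, hx.2⟩).continuousAt
    apply hpsi.congr
    filter_upwards [IsOpen.mem_nhds (isOpen_lt continuous_const continuous_id) h] with y hy
    exact (phiEnt_eq_psiEnt (ne_of_gt hy)).symm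

lemma phiEnt_strictMonoOn : StrictMonoOn phiEnt (Set.Ico 0 1) := by
  intro a ha b hb hab
  have hb0 : 0 < b := lt_of_le_of_lt ha.1 hab
  rw [phiEnt_eq_psiEnt hb0.ne']
  rcases eq_or_lt_of_le ha.1 with h | h
  · rw [← h, phiEnt_zero]
    calc (2:ℝ) ≤ psiEnt (b / 2) := two_le_psiEnt _ ⟨by linarith, by linarith [hb.2]⟩
    _ < psiEnt b := psiEnt_strictMono ⟨by linarith, by linarith [hb.2]⟩
        ⟨hb0, hb.2⟩ (by linarith)
  · rw [phiEnt_eq_psiEnt h.ne']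
    exact psiEnt_strictMono ⟨h, ha.2⟩ ⟨hb0, hb.2⟩ hab

lemma phiEnt_exists {p : ℝ} (hp : 2 ≤ p) : ∃ x ∈ Set.Ico (0:ℝ) 1, phiEnt x = p := by
  set c : ℝ := 1 - Real.exp (-(4 * p)) with hc_def
  have he0 : 0 < Real.exp (-(4 * p)) := Real.exp_pos _
  have he9 : 4 * p + 1 ≤ Real.exp (4 * p) := Real.add_one_le_exp _
  have hemul : Real.exp (-(4 * p)) * Real.exp (4 * p) = 1 := by
    rw [← Real.exp_add]; simp
  have hehalf : Real.exp (-(4 * p)) ≤ 1 / 2 := by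
    nlinarith [hemul, he9, he0, hp]
  have hc : c ∈ Set.Ioo (0:ℝ) 1 := ⟨by simp only [hc_def]; linarith, by
    simp only [hc_def]; linarith⟩
  have hchalf : 1 / 2 ≤ c := by simp only [hc_def]; linarith
  have h1mc : 1 - c = Real.exp (-(4 * p)) := by simp [hc_def]
  have hg : 2 * p ≤ gEnt c := by
    rw [gEnt, h1mc, Real.log_exp]
    have : 0 ≤ Real.log (1 + c) := Real.log_nonneg (by linarith [hc.1])
    linarith
  have hG : binEnt c ≤ 1 := le_trans (binEnt_le_log_two c ⟨hc.1.le, hc.2⟩)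
    (by linarith [Real.log_two_lt_d9])
  have hGpos := binEnt_pos c hc
  have hpsic : p ≤ psiEnt c := by
    rw [psiEnt, le_div_iff₀ hGpos]
    nlinarith [hg, hchalf]
  have hsub : Set.Icc (0:ℝ) c ⊆ Set.Ico 0 1 := fun y hy =>
    ⟨hy.1, lt_of_le_of_lt hy.2 hc.2⟩
  have hcont : ContinuousOn phiEnt (Set.Icc 0 c) := phiEnt_contOn.mono hsub
  have hivt := intermediate_value_Icc hc.1.le hcont
  have hmem : p ∈ Set.Icc (phiEnt 0) (phiEnt c) := by
    rw [phiEnt_zero, phiEnt_eq_psiEnt hc.1.ne']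
    exact ⟨hp, hpsic⟩
  obtain ⟨x, hx, hxp⟩ := hivt hmem
  exact ⟨x, hsub hx, hxp⟩

theorem phiEnt_continuous_strictMono_range :
    ContinuousOn phiEnt (Set.Ico 0 1) ∧
    StrictMonoOn phiEnt (Set.Ico 0 1) ∧
    phiEnt '' Set.Ico 0 1 = Set.Ici 2 ∧
    ∀ p : ℝ, 2 ≤ p → ∃! x, x ∈ Set.Ico (0 : ℝ) 1 ∧ phiEnt x = p := by
  refine ⟨phiEnt_contOn, phiEnt_strictMonoOn, ?_, ?_⟩
  · ext p
    simp only [Set.mem_image, Set.mem_Ici]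
    constructor
    · rintro ⟨x, hx, rfl⟩
      exact two_le_phiEnt x hx
    · intro hp
      obtain ⟨x, hx, hxp⟩ := phiEnt_exists hp
      exact ⟨x, hx, hxp⟩
  · intro p hp
    obtain ⟨x, hx, hxp⟩ := phiEnt_exists hp
    refine ⟨x, ⟨hx, hxp⟩, ?_⟩
    rintro y ⟨hy, hyp⟩
    exact phiEnt_strictMonoOn.injOn hy hx (hyp.trans hxp.symm)
end

section
/- Let S_N = σ_1 + ... + σ_N where σ_i are i.i.d. uniform on {-1, +1}. Then for every x ∈ [0,1] and every N ≥ 1, P(|S_N| ≥ N x) ≤ 2 exp(-N·I(x)), where I(x) = ((1+x)log(1+x)+(1-x)log(1-x))/2. -/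
open MeasureTheory ProbabilityTheory

lemma rad_mgf_aux {Ω : Type*} [MeasureSpace Ω] [IsProbabilityMeasure (ℙ : Measure Ω)]
    (X : Ω → ℝ) (hX : Measurable X) (hpm : ∀ ω, X ω = 1 ∨ X ω = -1)
    (h1 : ℙ {ω | X ω = 1} = 1 / 2) (t : ℝ) :
    Integrable (fun ω => Real.exp (t * X ω)) ℙ ∧ mgf X ℙ t = Real.cosh t := by
  set A : Set Ω := {ω | X ω = 1} with hA
  have hAm : MeasurableSet A := hX (measurableSet_singleton 1)
  have hfeq : (fun ω => Real.exp (t * X ω)) =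
      fun ω => A.indicator (fun _ => Real.exp t - Real.exp (-t)) ω + Real.exp (-t) := by
    funext ω
    rcases hpm ω with h | h
    · have : ω ∈ A := h
      simp [Set.indicator_of_mem this, h]
    · have : ω ∉ A := by simp [hA, h]; norm_num
      simp [Set.indicator_of_notMem this, h]
  have hint : Integrable (fun ω => Real.exp (t * X ω)) ℙ := by
    rw [hfeq]
    exact ((integrable_const _).indicator hAm).add (integrable_const _)
  refine ⟨hint, ?_⟩
  have htoReal : (ℙ A).toReal = 1 / 2 := by rw [h1]; simp
  rw [mgf, hfeq]
  rw [integral_add (((integrable_const _)).indicator hAm) (integrable_const _),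
    integral_indicator_const _ hAm, integral_const]
  simp [measureReal_def, htoReal, Real.cosh_eq]
  ring

/-- Tail bound for sums of i.i.d. Rademacher variables:
`P(|S_N| ≥ Nx) ≤ 2 exp(−N·I(x))`. -/
theorem rademacher_tail_bound {Ω : Type*} [MeasureSpace Ω]
    [IsProbabilityMeasure (ℙ : Measure Ω)] (N : ℕ) (hN : 1 ≤ N)
    (σ : Fin N → Ω → ℝ)
    (hmeas : ∀ i, Measurable (σ i))
    (hindep : iIndepFun σ ℙ)
    (hpm : ∀ i, ∀ ω, σ i ω = 1 ∨ σ i ω = -1)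
    (h1 : ∀ i, ℙ {ω | σ i ω = 1} = 1 / 2)
    (hm1 : ∀ i, ℙ {ω | σ i ω = -1} = 1 / 2) :
    ∀ x ∈ Set.Icc (0 : ℝ) 1,
      ℙ {ω | (N : ℝ) * x ≤ |∑ i, σ i ω|}
        ≤ ENNReal.ofReal (2 * Real.exp (-(N : ℝ) * binEnt x)) := by
  intro x hx
  obtain ⟨hx0, hx1⟩ := hx
  -- basic facts
  have haux : ∀ i t, Integrable (fun ω => Real.exp (t * σ i ω)) ℙ ∧
      mgf (σ i) ℙ t = Real.cosh t :=
    fun i t => rad_mgf_aux (σ i) (hmeas i) (hpm i) (h1 i) t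
  have hmgfS : ∀ t : ℝ, mgf (∑ i, σ i) ℙ t = Real.cosh t ^ N := by
    intro t
    rw [hindep.mgf_sum hmeas]
    simp [(fun i => (haux i t).2)]
  have hintS : ∀ t : ℝ, Integrable (fun ω => Real.exp (t * (∑ i, σ i) ω)) ℙ := by
    intro t
    exact hindep.integrable_exp_mul_sum hmeas (fun i _ => (haux i t).1)
  -- the Chernoff bound for every t ≥ 0
  have key : ∀ t : ℝ, 0 ≤ t →
      (ℙ {ω | (N : ℝ) * x ≤ |∑ i, σ i ω|}).toReal
        ≤ 2 * (Real.exp (-t * x) * Real.cosh t) ^ N := by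
    intro t ht
    have hsub : {ω | (N : ℝ) * x ≤ |∑ i, σ i ω|} ⊆
        {ω : Ω | (N : ℝ) * x ≤ (∑ i, σ i) ω} ∪ {ω : Ω | (∑ i, σ i) ω ≤ -((N : ℝ) * x)} := by
      intro ω hω
      simp only [Set.mem_setOf_eq] at hω
      rcases le_abs.mp hω with h | h
      · left; simpa [Finset.sum_apply] using h
      · right; simp only [Set.mem_setOf_eq, Finset.sum_apply]; linarith
    have h2 := measure_ge_le_exp_mul_mgf (μ := ℙ) (X := ∑ i, σ i) ((N : ℝ) * x) ht (hintS t)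
    have h3 := measure_le_le_exp_mul_mgf (μ := ℙ) (X := ∑ i, σ i) (-((N : ℝ) * x))
      (neg_nonpos.mpr ht) (hintS (-t))
    rw [hmgfS t] at h2
    rw [hmgfS (-t), Real.cosh_neg] at h3
    have hmono : (ℙ {ω | (N : ℝ) * x ≤ |∑ i, σ i ω|}).toReal
        ≤ (ℙ {ω : Ω | (N : ℝ) * x ≤ (∑ i, σ i) ω}).toReal
          + (ℙ {ω : Ω | (∑ i, σ i) ω ≤ -((N : ℝ) * x)}).toReal := by
      have := (measure_mono hsub).trans (measure_union_le (μ := ℙ) _ _)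
      calc (ℙ {ω | (N : ℝ) * x ≤ |∑ i, σ i ω|}).toReal
          ≤ (ℙ {ω : Ω | (N : ℝ) * x ≤ (∑ i, σ i) ω}
              + ℙ {ω : Ω | (∑ i, σ i) ω ≤ -((N : ℝ) * x)}).toReal := by
            exact ENNReal.toReal_mono
              (ENNReal.add_lt_top.mpr ⟨measure_lt_top _ _, measure_lt_top _ _⟩).ne this
        _ = _ := ENNReal.toReal_add (measure_ne_top _ _) (measure_ne_top _ _)
    have hexp : Real.exp (-t * ((N : ℝ) * x)) = Real.exp (-t * x) ^ N := by
      rw [← Real.exp_nat_mul]; ring_nf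
    have hexp2 : Real.exp (- -t * -((N : ℝ) * x)) = Real.exp (-t * x) ^ N := by
      rw [← Real.exp_nat_mul]; ring_nf
    calc (ℙ {ω | (N : ℝ) * x ≤ |∑ i, σ i ω|}).toReal
        ≤ Real.exp (-t * ((N : ℝ) * x)) * Real.cosh t ^ N
          + Real.exp (- -t * -((N : ℝ) * x)) * Real.cosh t ^ N := by
          exact hmono.trans (add_le_add h2 h3)
      _ = 2 * (Real.exp (-t * x) * Real.cosh t) ^ N := by
          rw [hexp, hexp2, mul_pow]; ring
  -- convert goal to real form
  rw [← ENNReal.ofReal_toReal (measure_ne_top ℙ _)]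
  apply ENNReal.ofReal_le_ofReal
  rcases lt_or_eq_of_le hx1 with hlt | heq
  · -- x < 1 : use the optimal t
    have h1x : (0:ℝ) < 1 - x := by linarith
    have h2x : (0:ℝ) < 1 + x := by linarith
    set t : ℝ := (Real.log (1 + x) - Real.log (1 - x)) / 2 with htdef
    have ht0 : 0 ≤ t := by
      have : Real.log (1 - x) ≤ Real.log (1 + x) :=
        Real.log_le_log h1x (by linarith)
      simp only [htdef]; linarith
    have hexp2t : Real.exp (2 * t) = (1 + x) / (1 - x) := by
      have : 2 * t = Real.log (1 + x) - Real.log (1 - x) := by rw [htdef]; ring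
      rw [this, Real.exp_sub, Real.exp_log h2x, Real.exp_log h1x]
    have hcosh : Real.cosh t = Real.exp (-t) / (1 - x) := by
      have he : Real.exp t = Real.exp (-t) * Real.exp (2 * t) := by
        rw [← Real.exp_add]; ring_nf
      rw [Real.cosh_eq, he, hexp2t]
      field_simp
      ring
    have hlog : Real.exp (-t * x) * Real.cosh t = Real.exp (- binEnt x) := by
      rw [hcosh, div_eq_mul_inv, ← Real.exp_log (show (0:ℝ) < (1 - x)⁻¹ by positivity),
        ← Real.exp_add, ← Real.exp_add, Real.log_inv]
      congr 1
      simp only [binEnt]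
      rw [htdef]; ring
    have := key t ht0
    rw [hlog, ← Real.exp_nat_mul] at this
    convert this using 3
    ring
  · -- x = 1 : limiting argument
    subst heq
    have hbin1 : binEnt 1 = Real.log 2 := by
      simp only [binEnt]
      norm_num
    have hlim : Filter.Tendsto (fun t : ℝ => 2 * ((1 + Real.exp (-(2 * t))) / 2) ^ N)
        Filter.atTop (nhds (2 * Real.exp (-(N : ℝ) * binEnt 1))) := by
      have h0 : Filter.Tendsto (fun t : ℝ => Real.exp (-(2 * t))) Filter.atTop (nhds 0) := by
        apply Real.tendsto_exp_atBot.comp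
        apply Filter.tendsto_neg_atTop_atBot.comp
        exact Filter.tendsto_id.const_mul_atTop two_pos
      have : (2 : ℝ) * Real.exp (-(N : ℝ) * binEnt 1) = 2 * ((1 + 0) / 2) ^ N := by
        rw [hbin1]
        rw [show (-(N : ℝ) * Real.log 2) = (N : ℝ) * (-Real.log 2) by ring,
          Real.exp_nat_mul, ← Real.log_inv, Real.exp_log (by norm_num)]
        norm_num
      rw [this]
      exact ((((tendsto_const_nhds.add h0)).div_const 2).pow N).const_mul 2
    apply ge_of_tendsto hlim
    filter_upwards [Filter.eventually_ge_atTop (0 : ℝ)] with t ht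
    have hc : Real.exp (-t * 1) * Real.cosh t = (1 + Real.exp (-(2 * t))) / 2 := by
      rw [Real.cosh_eq, mul_one, show (-(2*t)) = -t + -t by ring, Real.exp_add]
      have h0 : Real.exp (-t) * Real.exp t = 1 := by
        rw [← Real.exp_add]; simp
      linear_combination h0 / 2
    have := key t ht
    rwa [hc] at this
end

section
/- Let η ~ N(0,1) and let H_k be the probabilist's Hermite polynomials. For integers a, b, c ≥ 0, E[H_a(η)·H_b(η)·H_c(η)] = a!·b!·c!/((s−a)!·(s−b)!·(s−c)!) if a+b+c = 2s is even and |a−b| ≤ c ≤ a+b, and equals 0 otherwise. -/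
open MeasureTheory ProbabilityTheory Polynomial Real

noncomputable section

namespace HermiteTriple

lemma derivative_hermite_int : ∀ n : ℕ, derivative (hermite n) = C (n : ℤ) * hermite (n - 1) := by
  intro n
  induction n with
  | zero => simp [hermite_zero]
  | succ n ih =>
    rw [hermite_succ, derivative_sub, derivative_mul, derivative_X, one_mul, ih]
    rw [derivative_mul, derivative_C, zero_mul, zero_add]
    match n with
    | 0 => simp [hermite_zero]
    | m + 1 =>
      have h : (m + 1 : ℕ) - 1 = m := rfl
      rw [h, show m + 1 + 1 - 1 = m + 1 from rfl, hermite_succ m]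
      simp only [Nat.cast_add, Nat.cast_one, map_add, map_one]
      ring

/-- The Hermite polynomial as a real polynomial. -/
def Hr (n : ℕ) : Polynomial ℝ := (hermite n).map (algebraMap ℤ ℝ)

lemma eval_Hr (n : ℕ) (x : ℝ) : eval x (Hr n) = aeval x (hermite n) := by
  rw [Hr, aeval_def, eval₂_eq_eval_map]

lemma Hr_zero : Hr 0 = 1 := by simp [Hr, hermite_zero]

lemma Hr_succ (n : ℕ) : Hr (n + 1) = X * Hr n - derivative (Hr n) := by
  simp [Hr, hermite_succ, Polynomial.map_sub, Polynomial.map_mul, derivative_map]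

lemma derivative_Hr (n : ℕ) : derivative (Hr n) = C (n : ℝ) * Hr (n - 1) := by
  rw [Hr, derivative_map, derivative_hermite_int, Polynomial.map_mul, map_C]
  simp [Hr]


lemma pow_le_aux (n : ℕ) (x : ℝ) :
    |x| ^ n ≤ (n.factorial * 4 ^ n : ℝ) * exp (x ^ 2 / 4) + 1 := by
  rcases le_total (|x|) 1 with h | h
  · have h1 : |x| ^ n ≤ 1 := pow_le_one₀ (abs_nonneg x) h
    have h2 : (0:ℝ) ≤ (n.factorial * 4 ^ n : ℝ) * exp (x ^ 2 / 4) := by positivity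
    linarith
  · have h1 : |x| ^ n ≤ |x| ^ (2 * n) := pow_le_pow_right₀ h (by omega)
    have h2 : |x| ^ (2 * n) = (x ^ 2 / 4) ^ n * 4 ^ n := by
      rw [pow_mul, sq_abs, div_pow]
      have h4 : ((4:ℝ) ^ n) ≠ 0 := by positivity
      field_simp
    have h3 : (x ^ 2 / 4) ^ n ≤ n.factorial * exp (x ^ 2 / 4) := by
      have h5 := Real.pow_div_factorial_le_exp (x := x ^ 2 / 4) (by positivity) n
      rw [div_le_iff₀ (by positivity)] at h5
      calc (x ^ 2 / 4) ^ n ≤ exp (x ^ 2 / 4) * n.factorial := h5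
        _ = n.factorial * exp (x ^ 2 / 4) := by ring
    calc |x| ^ n ≤ (x ^ 2 / 4) ^ n * 4 ^ n := by rw [← h2]; exact h1
      _ ≤ (n.factorial * exp (x ^ 2 / 4)) * 4 ^ n :=
          mul_le_mul_of_nonneg_right h3 (by positivity)
      _ ≤ (n.factorial * 4 ^ n : ℝ) * exp (x ^ 2 / 4) + 1 := by nlinarith [exp_pos (x^2/4)]

lemma integrable_pow_gauss (n : ℕ) :
    Integrable fun x : ℝ => x ^ n * exp (-(x ^ 2 / 2)) := by
  have hg : Integrable (fun x : ℝ =>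
      (n.factorial * 4 ^ n : ℝ) * exp (-(1/4 : ℝ) * x ^ 2) + exp (-(1/2 : ℝ) * x ^ 2)) :=
    ((integrable_exp_neg_mul_sq (by norm_num)).const_mul _).add
      (integrable_exp_neg_mul_sq (by norm_num))
  apply hg.mono'
  · exact ((continuous_pow n).mul (by fun_prop)).aestronglyMeasurable
  · filter_upwards with x
    rw [norm_mul, norm_pow, Real.norm_eq_abs, Real.norm_eq_abs, abs_exp]
    have h1 := pow_le_aux n x
    have h2 : exp (x ^ 2 / 4) * exp (-(x ^ 2 / 2)) = exp (-(1/4 : ℝ) * x ^ 2) := by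
      rw [← exp_add]; ring_nf
    have h3 : exp (-(x ^ 2 / 2)) = exp (-(1/2 : ℝ) * x ^ 2) := by ring_nf
    calc |x| ^ n * exp (-(x ^ 2 / 2))
        ≤ ((n.factorial * 4 ^ n : ℝ) * exp (x ^ 2 / 4) + 1) * exp (-(x ^ 2 / 2)) :=
          mul_le_mul_of_nonneg_right h1 (exp_nonneg _)
      _ = (n.factorial * 4 ^ n : ℝ) * (exp (x ^ 2 / 4) * exp (-(x ^ 2 / 2)))
            + exp (-(x ^ 2 / 2)) := by ring
      _ = (n.factorial * 4 ^ n : ℝ) * exp (-(1/4 : ℝ) * x ^ 2) + exp (-(1/2 : ℝ) * x ^ 2) := by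
          rw [h2, h3]

lemma integrable_poly_gauss (P : Polynomial ℝ) :
    Integrable fun x : ℝ => eval x P * exp (-(x ^ 2 / 2)) := by
  induction P using Polynomial.induction_on' with
  | add p q hp hq =>
    have := hp.add hq
    apply this.congr
    filter_upwards with x
    simp [add_mul]
  | monomial m a =>
    have := (integrable_pow_gauss m).const_mul a
    apply this.congr
    filter_upwards with x
    simp [eval_monomial, mul_assoc]

lemma gaussianReal_eq_withDensity :
    gaussianReal 0 1 = (volume : Measure ℝ).withDensity
      (fun x => ((gaussianPDFReal 0 1 x).toNNReal : ENNReal)) := by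
  rw [gaussianReal_of_var_ne_zero 0 one_ne_zero]
  rfl

lemma pdf01 (x : ℝ) :
    gaussianPDFReal 0 1 x = (Real.sqrt (2 * π))⁻¹ * exp (-(x ^ 2 / 2)) := by
  rw [gaussianPDFReal]
  norm_num [neg_div]

lemma integral_gauss (g : ℝ → ℝ) :
    ∫ x, g x ∂(gaussianReal 0 1)
      = (Real.sqrt (2 * π))⁻¹ * ∫ x, g x * exp (-(x ^ 2 / 2)) := by
  rw [gaussianReal_eq_withDensity,
    integral_withDensity_eq_integral_smul ((measurable_gaussianPDFReal 0 1).real_toNNReal) g]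
  have : (fun x => (gaussianPDFReal 0 1 x).toNNReal • g x)
      = fun x => (Real.sqrt (2 * π))⁻¹ * (g x * exp (-(x ^ 2 / 2))) := by
    funext x
    rw [NNReal.smul_def, smul_eq_mul, Real.coe_toNNReal _ (gaussianPDFReal_nonneg 0 1 x), pdf01]
    ring
  rw [this, integral_const_mul]

lemma integrable_eval_gauss (P : Polynomial ℝ) :
    Integrable (fun x => eval x P) (gaussianReal 0 1) := by
  rw [gaussianReal_eq_withDensity,
    integrable_withDensity_iff_integrable_smul ((measurable_gaussianPDFReal 0 1).real_toNNReal)]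
  have h : Integrable (fun x : ℝ => (Real.sqrt (2 * π))⁻¹ * (eval x P * exp (-(x ^ 2 / 2)))) :=
    (integrable_poly_gauss P).const_mul _
  apply h.congr
  filter_upwards with x
  rw [NNReal.smul_def, smul_eq_mul, Real.coe_toNNReal _ (gaussianPDFReal_nonneg 0 1 x), pdf01]
  ring

lemma gauss_ibp (Q : Polynomial ℝ) :
    ∫ x, (x * eval x Q - eval x (derivative Q)) ∂(gaussianReal 0 1) = 0 := by
  rw [integral_gauss]
  have h : ∫ x : ℝ, (x * eval x Q - eval x (derivative Q)) * exp (-(x ^ 2 / 2)) = 0 := by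
    apply integral_eq_zero_of_hasDerivAt_of_integrable
      (f := fun x => -(eval x Q * exp (-(x ^ 2 / 2))))
    · intro x
      have hexp : HasDerivAt (fun y : ℝ => exp (-(y ^ 2 / 2)))
          (-x * exp (-(x ^ 2 / 2))) x := by
        have h1 : HasDerivAt (fun y : ℝ => -(y ^ 2 / 2)) (-x) x := by
          have : HasDerivAt (fun y : ℝ => -(y ^ 2 / 2)) _ x := ((hasDerivAt_pow 2 x).div_const 2).neg
          convert this using 1
          ring
        have := h1.exp
        convert this using 1
        ring
      have : HasDerivAt (fun y => -(eval y Q * exp (-(y ^ 2 / 2)))) _ x :=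
        ((Q.hasDerivAt x).mul hexp).neg
      refine this.congr_deriv ?_
      ring
    · have := integrable_poly_gauss (X * Q - derivative Q)
      apply this.congr
      filter_upwards with x
      simp [sub_mul]
    · exact (integrable_poly_gauss Q).neg.congr (by filter_upwards with x; simp [Pi.neg_apply])
  rw [h, mul_zero]


/-- Integral of a polynomial against the standard Gaussian. -/
def J (P : Polynomial ℝ) : ℝ := ∫ x, eval x P ∂(gaussianReal 0 1)

lemma J_sub (P Q : Polynomial ℝ) : J (P - Q) = J P - J Q := by
  have h : (fun x => eval x (P - Q)) = fun x => eval x P - eval x Q := by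
    funext x; simp
  rw [J, h, integral_sub (integrable_eval_gauss P) (integrable_eval_gauss Q)]
  rfl

lemma J_add (P Q : Polynomial ℝ) : J (P + Q) = J P + J Q := by
  have h : (fun x => eval x (P + Q)) = fun x => eval x P + eval x Q := by
    funext x; simp
  rw [J, h, integral_add (integrable_eval_gauss P) (integrable_eval_gauss Q)]
  rfl

lemma J_C_mul (r : ℝ) (P : Polynomial ℝ) : J (C r * P) = r * J P := by
  have h : (fun x => eval x (C r * P)) = fun x => r * eval x P := by
    funext x; simp
  rw [J, h, integral_const_mul]
  rfl

lemma J_X_mul (P : Polynomial ℝ) : J (X * P) = J (derivative P) := by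
  have key := gauss_ibp P
  have i1 : Integrable (fun x : ℝ => x * eval x P) (gaussianReal 0 1) := by
    apply (integrable_eval_gauss (X * P)).congr
    filter_upwards with x; simp
  have i2 := integrable_eval_gauss (derivative P)
  have h2 := integral_sub i1 i2
  rw [key] at h2
  have hXP : J (X * P) = ∫ x, x * eval x P ∂(gaussianReal 0 1) := by
    rw [J]
    congr 1
    funext x; simp
  rw [hXP, J]
  linarith [h2]

lemma J_Hr (n : ℕ) : J (Hr n) = if n = 0 then 1 else 0 := by
  cases n with
  | zero =>
    rw [Hr_zero, if_pos rfl, J]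
    simp
  | succ n =>
    rw [if_neg (Nat.succ_ne_zero n)]
    have e : Hr (n + 1) = X * Hr n - derivative (Hr n) := Hr_succ n
    rw [J, e]
    have h : (fun x => eval x (X * Hr n - derivative (Hr n)))
        = fun x => x * eval x (Hr n) - eval x (derivative (Hr n)) := by
      funext x; simp
    rw [h]
    exact gauss_ibp (Hr n)

/-- The triple-product integral. -/
def T (a b c : ℕ) : ℝ := J (Hr a * Hr b * Hr c)

lemma T_rec (a b c : ℕ) :
    T (a + 1) b c = b * T a (b - 1) c + c * T a b (c - 1) := by
  have e : Hr (a + 1) * Hr b * Hr c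
      = X * (Hr a * Hr b * Hr c) - derivative (Hr a) * Hr b * Hr c := by
    rw [Hr_succ]; ring
  rw [T, e, J_sub, J_X_mul]
  have e2 : derivative (Hr a * Hr b * Hr c)
      = derivative (Hr a) * Hr b * Hr c
        + (Hr a * derivative (Hr b) * Hr c + Hr a * Hr b * derivative (Hr c)) := by
    simp only [derivative_mul]; ring
  rw [e2, J_add, J_add]
  have e3 : Hr a * derivative (Hr b) * Hr c = C (b : ℝ) * (Hr a * Hr (b - 1) * Hr c) := by
    rw [derivative_Hr]; ring
  have e4 : Hr a * Hr b * derivative (Hr c) = C (c : ℝ) * (Hr a * Hr b * Hr (c - 1)) := by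
    rw [derivative_Hr]; ring
  rw [e3, e4, J_C_mul, J_C_mul]
  rw [T, T]
  ring

lemma T_zero_comm (b c : ℕ) : T 0 b c = T b 0 c := by
  rw [T, T, show Hr 0 * Hr b * Hr c = Hr b * Hr 0 * Hr c from by ring]

lemma T_pair : ∀ b c : ℕ, T b 0 c = if b = c then (b.factorial : ℝ) else 0 := by
  intro b
  induction b with
  | zero =>
    intro c
    rw [T, Hr_zero, one_mul, one_mul, J_Hr c]
    cases c with
    | zero => simp
    | succ c => simp
  | succ b ih =>
    intro c
    rw [T_rec]
    cases c with
    | zero => simp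
    | succ c =>
      simp only [Nat.cast_zero, zero_mul, zero_add, Nat.add_sub_cancel]
      rw [ih c]
      by_cases h : b = c
      · subst h
        rw [if_pos rfl, if_pos rfl]
        push_cast [Nat.factorial_succ]
        ring
      · rw [if_neg h, if_neg (by omega), mul_zero]


/-- The closed-form value. -/
def F (a b c : ℕ) : ℝ :=
  if Even (a + b + c) ∧ c ≤ a + b ∧ a ≤ b + c ∧ b ≤ a + c then
    (a.factorial : ℝ) * (b.factorial : ℝ) * (c.factorial : ℝ) /
      ((((a + b + c) / 2 - a).factorial : ℝ) * (((a + b + c) / 2 - b).factorial : ℝ)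
        * (((a + b + c) / 2 - c).factorial : ℝ))
  else 0

lemma F_eq_zero {a b c : ℕ}
    (h : ¬((a + b + c) % 2 = 0 ∧ c ≤ a + b ∧ a ≤ b + c ∧ b ≤ a + c)) : F a b c = 0 := by
  rw [F, if_neg]
  exact fun hc => h ⟨Nat.even_iff.mp hc.1, hc.2⟩

lemma F_tri (p q r : ℕ) : F (q + r) (p + r) (p + q)
    = ((q + r).factorial : ℝ) * ((p + r).factorial : ℝ) * ((p + q).factorial : ℝ) /
        ((p.factorial : ℝ) * (q.factorial : ℝ) * (r.factorial : ℝ)) := by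
  rw [F, if_pos]
  · have e1 : ((q + r) + (p + r) + (p + q)) / 2 - (q + r) = p := by omega
    have e2 : ((q + r) + (p + r) + (p + q)) / 2 - (p + r) = q := by omega
    have e3 : ((q + r) + (p + r) + (p + q)) / 2 - (p + q) = r := by omega
    rw [e1, e2, e3]
  · refine ⟨?_, by omega, by omega, by omega⟩
    rw [Nat.even_iff]; omega

lemma F_rec (a b c : ℕ) :
    F (a + 1) b c = b * F a (b - 1) c + c * F a b (c - 1) := by
  by_cases h : Even (a + 1 + b + c) ∧ c ≤ a + 1 + b ∧ a + 1 ≤ b + c ∧ b ≤ a + 1 + c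
  · rw [Nat.even_iff] at h
    obtain ⟨p, q, r, ha, hb, hc⟩ : ∃ p q r, a + 1 = q + r ∧ b = p + r ∧ c = p + q :=
      ⟨(a + 1 + b + c) / 2 - (a + 1), (a + 1 + b + c) / 2 - b, (a + 1 + b + c) / 2 - c,
        by omega, by omega, by omega⟩
    subst hb hc
    rcases q with _ | Q
    · rcases r with _ | R
      · omega
      · -- q = 0, r = R+1 ; subst makes R into a
        obtain rfl : a = R := by omega
        simp only [Nat.add_zero]
        rw [show p + (a + 1) = p + a + 1 from by omega]
        simp only [Nat.add_sub_cancel]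
        have h1 := F_tri p 0 (a + 1)
        have h2 := F_tri p 0 a
        rw [show (0 : ℕ) + (a + 1) = a + 1 from by omega,
            show p + (a + 1) = p + a + 1 from by omega,
            show p + 0 = p from rfl] at h1
        rw [show (0 : ℕ) + a = a from by omega, show p + 0 = p from rfl] at h2
        rw [h1, h2]
        have hz : (p : ℝ) * F a (p + a + 1) (p - 1) = 0 := by
          rcases p with _ | P
          · simp
          · rw [F_eq_zero (by omega), mul_zero]
        rw [hz, add_zero]
        rw [show (a + 1).factorial = (a + 1) * a.factorial from Nat.factorial_succ a,
            show (p + a + 1).factorial = (p + a + 1) * (p + a).factorial from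
              Nat.factorial_succ (p + a)]
        have n1 : (p.factorial : ℝ) ≠ 0 := Nat.cast_ne_zero.mpr (Nat.factorial_ne_zero p)
        have n2 : (a.factorial : ℝ) ≠ 0 := Nat.cast_ne_zero.mpr (Nat.factorial_ne_zero a)
        simp only [Nat.factorial_zero]
        push_cast
        field_simp
    · rcases r with _ | R
      · -- q = Q+1, r = 0 ; subst makes Q into a
        obtain rfl : a = Q := by omega
        simp only [Nat.add_zero]
        rw [show p + (a + 1) = p + a + 1 from by omega]
        simp only [Nat.add_sub_cancel]
        have h1 := F_tri p (a + 1) 0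
        have h2 := F_tri p a 0
        rw [show (a + 1) + 0 = a + 1 from rfl, show p + 0 = p from rfl,
            show p + (a + 1) = p + a + 1 from by omega] at h1
        rw [show a + 0 = a from rfl, show p + 0 = p from rfl] at h2
        rw [h1, h2]
        have hz : (p : ℝ) * F a (p - 1) (p + a + 1) = 0 := by
          rcases p with _ | P
          · simp
          · rw [F_eq_zero (by omega), mul_zero]
        rw [hz, zero_add]
        rw [show (a + 1).factorial = (a + 1) * a.factorial from Nat.factorial_succ a,
            show (p + a + 1).factorial = (p + a + 1) * (p + a).factorial from
              Nat.factorial_succ (p + a)]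
        have n1 : (p.factorial : ℝ) ≠ 0 := Nat.cast_ne_zero.mpr (Nat.factorial_ne_zero p)
        have n2 : (a.factorial : ℝ) ≠ 0 := Nat.cast_ne_zero.mpr (Nat.factorial_ne_zero a)
        simp only [Nat.factorial_zero]
        push_cast
        field_simp
      · -- q = Q+1, r = R+1 : a = Q+R+1
        obtain rfl : a = Q + R + 1 := by omega
        rw [show p + (R + 1) = p + R + 1 from by omega,
            show p + (Q + 1) = p + Q + 1 from by omega]
        simp only [Nat.add_sub_cancel]
        have h1 := F_tri p (Q + 1) (R + 1)
        have h2 := F_tri p (Q + 1) R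
        have h3 := F_tri p Q (R + 1)
        rw [show (Q + 1) + (R + 1) = Q + R + 1 + 1 from by omega,
            show p + (R + 1) = p + R + 1 from by omega,
            show p + (Q + 1) = p + Q + 1 from by omega] at h1
        rw [show (Q + 1) + R = Q + R + 1 from by omega,
            show p + (Q + 1) = p + Q + 1 from by omega] at h2
        rw [show Q + (R + 1) = Q + R + 1 from by omega,
            show p + (R + 1) = p + R + 1 from by omega] at h3
        rw [h1, h2, h3]
        rw [show (Q + R + 1 + 1).factorial = (Q + R + 1 + 1) * (Q + R + 1).factorial from
              Nat.factorial_succ (Q + R + 1),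
            show (p + R + 1).factorial = (p + R + 1) * (p + R).factorial from
              Nat.factorial_succ (p + R),
            show (p + Q + 1).factorial = (p + Q + 1) * (p + Q).factorial from
              Nat.factorial_succ (p + Q),
            show (Q + 1).factorial = (Q + 1) * Q.factorial from Nat.factorial_succ Q,
            show (R + 1).factorial = (R + 1) * R.factorial from Nat.factorial_succ R]
        have n1 : (p.factorial : ℝ) ≠ 0 := Nat.cast_ne_zero.mpr (Nat.factorial_ne_zero p)
        have n2 : (Q.factorial : ℝ) ≠ 0 := Nat.cast_ne_zero.mpr (Nat.factorial_ne_zero Q)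
        have n3 : (R.factorial : ℝ) ≠ 0 := Nat.cast_ne_zero.mpr (Nat.factorial_ne_zero R)
        push_cast
        field_simp
        ring
  · rw [Nat.even_iff] at h
    rw [F_eq_zero (by omega)]
    have hb : (b : ℝ) * F a (b - 1) c = 0 := by
      rcases b with _ | B
      · simp
      · simp only [Nat.add_sub_cancel]
        rw [F_eq_zero (by omega), mul_zero]
    have hc : (c : ℝ) * F a b (c - 1) = 0 := by
      rcases c with _ | C
      · simp
      · simp only [Nat.add_sub_cancel]
        rw [F_eq_zero (by omega), mul_zero]
    rw [hb, hc, add_zero]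

lemma T_eq_F : ∀ a b c : ℕ, T a b c = F a b c := by
  intro a
  induction a with
  | zero =>
    intro b c
    rw [T_zero_comm, T_pair]
    by_cases h : b = c
    · subst h
      rw [if_pos rfl]
      have h0 := F_tri b 0 0
      rw [show (0 : ℕ) + 0 = 0 from rfl, show b + 0 = b from rfl] at h0
      rw [h0]
      simp [Nat.factorial_zero]
    · rw [if_neg h]
      rw [F_eq_zero (by omega)]
  | succ a ih =>
    intro b c
    rw [T_rec, ih, ih, F_rec]

end HermiteTriple

end

/-- Triple product formula for probabilist's Hermite polynomials under the
standard Gaussian: if `a+b+c = 2s` is even and the triangle inequalities hold,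
`E[H_a H_b H_c] = a!b!c!/((s−a)!(s−b)!(s−c)!)`; otherwise the expectation is 0. -/
theorem hermite_triple_product (a b c : ℕ) :
    (∀ s : ℕ, a + b + c = 2 * s → c ≤ a + b → a ≤ b + c → b ≤ a + c →
      ∫ x, (aeval x (hermite a)) * (aeval x (hermite b)) * (aeval x (hermite c))
          ∂(gaussianReal 0 1)
        = (a.factorial : ℝ) * (b.factorial : ℝ) * (c.factorial : ℝ) /
            (((s - a).factorial : ℝ) * ((s - b).factorial : ℝ) * ((s - c).factorial : ℝ))) ∧
    (¬ (Even (a + b + c) ∧ c ≤ a + b ∧ a ≤ b + c ∧ b ≤ a + c) →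
      ∫ x, (aeval x (hermite a)) * (aeval x (hermite b)) * (aeval x (hermite c))
          ∂(gaussianReal 0 1) = 0) := by
  have key : ∫ x, (aeval x (hermite a)) * (aeval x (hermite b)) * (aeval x (hermite c))
      ∂(gaussianReal 0 1) = HermiteTriple.F a b c := by
    rw [← HermiteTriple.T_eq_F]
    rw [HermiteTriple.T, HermiteTriple.J]
    congr 1
    funext x
    simp [HermiteTriple.eval_Hr]
  constructor
  · intro s hs h1 h2 h3
    rw [key, HermiteTriple.F, if_pos ⟨⟨s, by omega⟩, h1, h2, h3⟩,
      show (a + b + c) / 2 = s from by omega]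
  · intro h
    rw [key]
    exact HermiteTriple.F_eq_zero (fun hc => h ⟨Nat.even_iff.mpr hc.1, hc.2⟩)
end
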